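/- arXiv:2108.03628 — 3 statements merged into one kernel-verified Lean document; each statement's English description precedes it below -/
import Mathlib

section
/- For every integer k ≥ 1, L_{4k+3} + 1 = 5 * F_{2k+1} * F_{2k+2}. -/
/-!
Writing `L (n + 1) = F n + F (n + 2)` and using the doubling formulas for `F (2n)` and `F (2n + 2)`,
`L (2n + 1) = 4 F n F (n + 1) + F (n + 1)² - F n²`, and Cassini's identity turns
`F (n + 1)² - F n F (n + 1) - F n²` into `(-1)ⁿ`. Hence `5 F n F (n + 1) = L (2n + 1) - (-1)ⁿ`,
which for odd `n = 2k + 1` is the claim.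
-/

def lucas : ℕ → ℕ
  | 0 => 2
  | 1 => 1
  | n + 2 => lucas (n + 1) + lucas n

open Nat

theorem lucas_add_one : ∀ n, lucas (n + 1) = fib n + fib (n + 2)
  | 0 => rfl
  | 1 => rfl
  | n + 2 => by
    rw [lucas, lucas_add_one n, lucas_add_one (n + 1)]
    simp only [fib_add_two]
    ring

theorem fib_add_one_sq_sub_fib_mul_fib_add_one_sub_fib_sq (n : ℕ) :
    (fib (n + 1) : ℤ) ^ 2 - fib n * fib (n + 1) - fib n ^ 2 = (-1) ^ n := by
  have cassini := Int.fib_succ_mul_fib_pred_sub_fib_sq n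
  have recurrence := Int.fib_add_two (n - 1)
  rw [sub_add_cancel, show (n : ℤ) - 1 + 2 = n + 1 by ring] at recurrence
  rw [Int.natAbs_natCast] at cassini
  push_cast [← Int.fib_natCast]
  linear_combination cassini + Int.fib (n + 1) * recurrence

theorem lucas_two_mul_add_one (n : ℕ) :
    (lucas (2 * n + 1) : ℤ) = 4 * fib n * fib (n + 1) + fib (n + 1) ^ 2 - fib n ^ 2 := by
  rw [lucas_add_one, fib_two_mul_add_two, fib_two_mul, Nat.cast_add, Nat.cast_mul,
    Nat.cast_sub (by grind [fib_le_fib_succ])]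
  push_cast
  ring

theorem five_mul_fib_mul_fib_add_one (n : ℕ) :
    5 * fib n * fib (n + 1) = (lucas (2 * n + 1) : ℤ) - (-1) ^ n := by
  rw [lucas_two_mul_add_one, ← fib_add_one_sq_sub_fib_mul_fib_add_one_sub_fib_sq]
  ring

theorem lucas_shift_7_general (k : ℕ) :
    lucas (4 * k + 3) + 1 = 5 * Nat.fib (2 * k + 1) * Nat.fib (2 * k + 2) := by
  have h := five_mul_fib_mul_fib_add_one (2 * k + 1)
  rw [(by ring : 2 * (2 * k + 1) + 1 = 4 * k + 3), (Odd.neg_one_pow ⟨k, rfl⟩)] at h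
  zify
  linarith

theorem lucas_shift_7 (k : ℕ) (hk : 1 ≤ k) :
    lucas (4 * k + 3) + 1 = 5 * Nat.fib (2 * k + 1) * Nat.fib (2 * k + 2) :=
  lucas_shift_7_general k
end

section
/- Let n ≥ 1 be an integer, p a prime dividing Φ_n (the n-th homogeneous cyclotomic factor at the golden ratio), and suppose n = z(p)·p^v with v ≥ 1 and (p, n) ≠ (2, 6), where z(p) is the rank of apparition of p in the Fibonacci sequence. Then p divides Φ_n exactly once, i.e. p ∥ Φ_n. -/
open Finset

noncomputable def goldenA : ℂ := (1 + Real.sqrt 5) / 2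

noncomputable def goldenB : ℂ := (1 - Real.sqrt 5) / 2

noncomputable def goldPhi (n : ℕ) : ℂ :=
  if n = 1 then 1 else
    ∏ k ∈ (Finset.Icc 1 n).filter (fun k => Nat.gcd n k = 1),
      (goldenA - Complex.exp (2 * Real.pi * Complex.I * k / n) * goldenB)

noncomputable def zrank (p : ℕ) : ℕ := sInf {n | 0 < n ∧ p ∣ Nat.fib n}

/-
Binet's formula and the factorisation x ^ n - y ^ n = ∏_{d ∣ n} ∏_{μ primitive d-th root} (x - μ y)
give F_n = ∏_{d ∣ n} Φ_d, the convention Φ_1 = 1 absorbing the factor α - β = √5.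
Write n = p k with k = z(p) p ^ (v - 1). Then F_n / F_k is Φ_n times a product of algebraic
integers, so Φ_n divides F_{pk} / F_k. For odd p, since p ∣ F_k, lifting the exponent for
x = α ^ k, y = β ^ k in the ring of algebraic integers (where β is a unit and p is not) shows
p² ∤ F_{pk} / F_k. For p = 2 we have 6 ∣ k, so 8 ∣ F_k, F_{k+1} is odd, and
F_{2k} / F_k = 2 F_{k+1} - F_k ≡ 2 (mod 4).
-/

open Real in
theorem goldenA_eq_ofReal : goldenA = (goldenRatio : ℂ) := by push_cast [goldenA]; rfl

open Real in
theorem goldenB_eq_ofReal : goldenB = (goldenConj : ℂ) := by push_cast [goldenB]; rfl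

theorem goldenA_sub_goldenB : goldenA - goldenB = √5 := by
  unfold goldenA goldenB; ring

theorem goldenA_mul_goldenB : goldenA * goldenB = -1 := by
  rw [goldenA_eq_ofReal, goldenB_eq_ofReal]; exact_mod_cast Real.goldenRatio_mul_goldenConj

theorem goldenA_pow_sub_goldenB_pow (n : ℕ) : goldenA ^ n - goldenB ^ n = √5 * Nat.fib n := by
  have h : Real.goldenRatio ^ n - Real.goldenConj ^ n = √5 * Nat.fib n := by
    rw [Real.coe_fib_eq, mul_div_cancel₀ _ (by positivity)]
  rw [goldenA_eq_ofReal, goldenB_eq_ofReal]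
  exact_mod_cast h

open Polynomial in
theorem isIntegral_goldenA : IsIntegral ℤ goldenA := by
  refine ⟨X ^ 2 - X - 1, by monicity!, ?_⟩
  rw [goldenA_eq_ofReal]
  simp only [eval₂_sub, eval₂_X_pow, eval₂_X, eval₂_one]
  have h : Real.goldenRatio ^ 2 - Real.goldenRatio - 1 = 0 := by rw [Real.goldenRatio_sq]; ring
  exact_mod_cast h

theorem isIntegral_goldenB : IsIntegral ℤ goldenB := by
  rw [show goldenB = 1 - goldenA by unfold goldenA goldenB; ring]
  exact isIntegral_one.sub isIntegral_goldenA

open Complex Real in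
theorem goldPhi_eq_prod_primitiveRoots {d : ℕ} (hd : d ≠ 1) :
    goldPhi d = ∏ μ ∈ primitiveRoots d ℂ, (goldenA - μ * goldenB) := by
  rcases Nat.eq_zero_or_pos d with rfl | hd0
  · simp [goldPhi]
  have hcop : ∀ k, d.gcd k = 1 ↔ k.Coprime d := fun k => by rw [Nat.coprime_comm]
  rw [goldPhi, if_neg hd]
  refine prod_nbij (fun k : ℕ => exp (2 * π * I * k / d)) ?_ ?_ ?_ (fun _ _ => rfl)
  · intro k hk
    rw [mem_filter, hcop] at hk
    rw [mem_primitiveRoots hd0, mul_div_assoc]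
    exact isPrimitiveRoot_exp_of_coprime k d hd0.ne' hk.2
  · have hlt : ∀ k ∈ (Icc 1 d).filter (fun k => d.gcd k = 1), k < d := fun k hk => by
      rw [mem_filter, mem_Icc] at hk
      refine hk.1.2.lt_of_ne ?_
      rintro rfl
      exact hd (by simpa using hk.2)
    have hpow : ∀ k : ℕ, exp (2 * π * I * k / d) = exp (2 * π * I / d) ^ k := fun k => by
      rw [← Complex.exp_nat_mul]; ring_nf
    intro k₁ hk₁ k₂ hk₂ h
    simp only [hpow] at h
    exact (isPrimitiveRoot_exp d hd0.ne').pow_inj (hlt k₁ hk₁) (hlt k₂ hk₂) h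
  · intro μ hμ
    rw [mem_coe, mem_primitiveRoots hd0, isPrimitiveRoot_iff μ d hd0.ne'] at hμ
    obtain ⟨i, hid, hi, rfl⟩ := hμ
    refine ⟨i, ?_, by simp only [mul_div_assoc]⟩
    rw [mem_coe, mem_filter, mem_Icc, hcop]
    refine ⟨⟨Nat.pos_of_ne_zero ?_, hid.le⟩, hi⟩
    rintro rfl
    exact hd ((Nat.coprime_zero_left d).mp hi)

theorem prod_divisors_goldPhi {n : ℕ} (hn : n ≠ 0) : ∏ d ∈ n.divisors, goldPhi d = Nat.fib n := by
  classical
  have h1 : 1 ∈ n.divisors := Nat.one_mem_divisors.mpr hn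
  have hroots : ∏ d ∈ n.divisors, ∏ μ ∈ primitiveRoots d ℂ, (goldenA - μ * goldenB)
      = goldenA ^ n - goldenB ^ n := by
    rw [← prod_biUnion (fun _ _ _ _ hne => IsPrimitiveRoot.disjoint hne),
      ← IsPrimitiveRoot.nthRoots_one_eq_biUnion_primitiveRoots,
      (Complex.isPrimitiveRoot_exp n hn).pow_sub_pow_eq_prod_sub_mul _ _ (Nat.pos_of_ne_zero hn)]
  have hsplit : ∀ f : ℕ → ℂ, ∏ d ∈ n.divisors, f d = f 1 * ∏ d ∈ n.divisors.erase 1, f d :=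
    fun f => (mul_prod_erase _ f h1).symm
  apply mul_left_cancel₀ (by simp : ((√5 : ℝ) : ℂ) ≠ 0)
  rw [← goldenA_pow_sub_goldenB_pow, ← hroots, hsplit, hsplit, IsPrimitiveRoot.primitiveRoots_one,
    prod_singleton, one_mul, goldPhi, if_pos rfl, one_mul, goldenA_sub_goldenB]
  exact congrArg _ (prod_congr rfl fun d hd => goldPhi_eq_prod_primitiveRoots (ne_of_mem_erase hd))

theorem isIntegral_goldPhi (d : ℕ) : IsIntegral ℤ (goldPhi d) := by
  rcases eq_or_ne d 1 with rfl | hd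
  · rw [goldPhi, if_pos rfl]; exact isIntegral_one
  rw [goldPhi_eq_prod_primitiveRoots hd]
  refine IsIntegral.prod _ fun μ hμ => isIntegral_goldenA.sub (IsIntegral.mul ?_ isIntegral_goldenB)
  have hd0 : 0 < d := Nat.pos_of_ne_zero (by rintro rfl; simp at hμ)
  exact ((mem_primitiveRoots hd0).mp hμ).isIntegral hd0

theorem natCast_dvd_natCast_of_eq_mul_isIntegral {K : Type*} [Field K] [CharZero K] {a b : ℕ}
    {c : K} (hc : IsIntegral ℤ c) (h : (b : K) = a * c) : a ∣ b := by
  rcases eq_or_ne a 0 with rfl | ha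
  · simpa using h
  have hc' : c = algebraMap ℚ K (b / a) := by
    rw [map_div₀, map_natCast, map_natCast, h, mul_div_cancel_left₀ _ (by exact_mod_cast ha)]
  rw [hc', isIntegral_algebraMap_iff (algebraMap ℚ K).injective,
    IsIntegrallyClosed.isIntegral_iff] at hc
  obtain ⟨z, hz⟩ := hc
  rw [algebraMap_int_eq, eq_intCast, eq_div_iff (by exact_mod_cast ha)] at hz
  exact Int.natCast_dvd_natCast.mp ⟨z, by rw [mul_comm]; exact_mod_cast hz.symm⟩

theorem not_isUnit_natCast_integralClosure {p : ℕ} (hp : p ≠ 1) :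
    ¬IsUnit (p : integralClosure ℤ ℂ) := by
  rw [isUnit_iff_dvd_one]
  rintro ⟨c, hc⟩
  refine hp (Nat.dvd_one.mp (natCast_dvd_natCast_of_eq_mul_isIntegral c.2 ?_))
  simpa using congrArg Subtype.val hc

theorem mul_fib_dvd_fib_of_eq_goldPhi {k n m : ℕ} (hkn : k ∣ n) (hk : k ≠ n)
    (hm : (m : ℂ) = goldPhi n) : m * Nat.fib k ∣ Nat.fib n := by
  rcases eq_or_ne n 0 with rfl | hn
  · simp
  have hk0 : k ≠ 0 := by rintro rfl; exact hn (Nat.eq_zero_of_zero_dvd hkn)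
  have hsub : k.divisors ⊆ n.divisors := Nat.divisors_subset_of_dvd hn hkn
  have hnmem : n ∈ n.divisors \ k.divisors := by
    simp only [mem_sdiff, Nat.mem_divisors_self n hn, Nat.mem_divisors, not_and, true_and]
    exact fun hnk _ => hk (Nat.dvd_antisymm hkn hnk)
  refine natCast_dvd_natCast_of_eq_mul_isIntegral
    (c := ∏ d ∈ (n.divisors \ k.divisors).erase n, goldPhi d)
    (IsIntegral.prod _ fun d _ => isIntegral_goldPhi d) ?_
  rw [← prod_divisors_goldPhi hn, ← prod_sdiff hsub, ← mul_prod_erase _ _ hnmem,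
    prod_divisors_goldPhi hk0, ← hm]
  push_cast; ring

theorem not_sq_dvd_geom_sum₂_of_dvd_sub {R : Type*} [CommRing R] [IsDomain R] [CharZero R]
    {p : ℕ} (hp : Odd p) (hpu : ¬IsUnit (p : R)) {x y : R} (hxy : (p : R) ∣ x - y)
    (hy : IsUnit y) : ¬(p : R) ^ 2 ∣ ∑ i ∈ range p, x ^ i * y ^ (p - 1 - i) := by
  obtain ⟨b, hb⟩ := hxy
  rw [sub_eq_iff_eq_add'] at hb
  subst hb
  intro h
  have h' : (p : R) ^ 2 ∣ p * y ^ (p - 1) := by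
    simpa using dvd_sub h (odd_sq_dvd_geom_sum₂_sub y b hp)
  rw [sq, mul_dvd_mul_iff_left (Nat.cast_ne_zero.mpr hp.pos.ne')] at h'
  exact hpu (isUnit_of_dvd_unit h' (hy.pow _))

theorem not_sq_mul_fib_dvd_fib_mul {p k : ℕ} (hp : Odd p) (hp1 : p ≠ 1) (hk : k ≠ 0)
    (hpk : p ∣ Nat.fib k) : ¬p ^ 2 * Nat.fib k ∣ Nat.fib (p * k) := by
  let a : integralClosure ℤ ℂ := ⟨goldenA, isIntegral_goldenA⟩
  let b : integralClosure ℤ ℂ := ⟨goldenB, isIntegral_goldenB⟩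
  have binet (n : ℕ) : a ^ n - b ^ n = (a - b) * Nat.fib n := Subtype.ext <| by
    push_cast
    rw [goldenA_pow_sub_goldenB_pow, goldenA_sub_goldenB]
  have hfib : (a - b) * Nat.fib k ≠ 0 := by
    refine mul_ne_zero (fun h => ?_) (Nat.cast_ne_zero.mpr (Nat.fib_pos.mpr hk.bot_lt).ne')
    simpa [a, b, goldenA_sub_goldenB] using congrArg Subtype.val h
  have hb : IsUnit b := IsUnit.of_mul_eq_one (-a) (Subtype.ext <| by
    show goldenB * -goldenA = 1
    rw [mul_neg, mul_comm, goldenA_mul_goldenB, neg_neg])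
  rintro ⟨c, hc⟩
  refine not_sq_dvd_geom_sum₂_of_dvd_sub (x := a ^ k) (y := b ^ k) hp
    (not_isUnit_natCast_integralClosure hp1) ?_ (hb.pow k) ⟨c, ?_⟩
  · obtain ⟨g, hg⟩ := hpk
    exact ⟨(a - b) * g, by rw [binet, hg]; push_cast; ring⟩
  · refine mul_left_cancel₀ hfib ?_
    rw [← binet k, mul_comm, geom_sum₂_mul, ← pow_mul, ← pow_mul, mul_comm k p, binet, hc, binet k]
    push_cast; ring

theorem not_four_mul_fib_dvd_fib_two_mul {k : ℕ} (hk : 6 ∣ k) (hk0 : k ≠ 0) :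
    ¬2 ^ 2 * Nat.fib k ∣ Nat.fib (2 * k) := by
  rw [Nat.fib_two_mul, mul_comm (2 ^ 2),
    Nat.mul_dvd_mul_iff_left (Nat.fib_pos.mpr (Nat.pos_of_ne_zero hk0))]
  have h8 : 8 ∣ Nat.fib k := Nat.fib_dvd 6 k hk
  have hodd : ¬2 ∣ Nat.fib (k + 1) := fun h2 => by
    have := Nat.dvd_gcd ((by norm_num : 2 ∣ 8).trans h8) h2
    rw [(Nat.fib_coprime_fib_succ k).gcd_eq_one] at this
    omega
  have hle : Nat.fib k ≤ Nat.fib (k + 1) := Nat.fib_le_fib_succ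
  omega

def fibStep (R : Type*) [AddGroup R] : Equiv.Perm (R × R) where
  toFun x := (x.2, x.1 + x.2)
  invFun x := (x.2 - x.1, x.1)
  left_inv x := by simp
  right_inv x := by simp

theorem fibStep_pow_apply (R : Type*) [AddGroupWithOne R] (n : ℕ) :
    (fibStep R ^ n) (0, 1) = ((Nat.fib n : R), (Nat.fib (n + 1) : R)) := by
  induction n with
  | zero => simp
  | succ n ih =>
    rw [pow_succ', Equiv.Perm.mul_apply, ih]
    simp [fibStep, Nat.fib_add_two]

theorem exists_pos_dvd_fib {m : ℕ} (hm : m ≠ 0) : ∃ n, 0 < n ∧ m ∣ Nat.fib n := by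
  have : NeZero m := ⟨hm⟩
  refine ⟨orderOf (fibStep (ZMod m)), orderOf_pos _, ?_⟩
  have h := congrArg (· (0, 1)) (pow_orderOf_eq_one (fibStep (ZMod m)))
  simp only [fibStep_pow_apply, Equiv.Perm.one_apply, Prod.mk.injEq] at h
  exact (ZMod.natCast_eq_zero_iff _ _).mp h.1

theorem zrank_spec {m : ℕ} (hm : m ≠ 0) : 0 < zrank m ∧ m ∣ Nat.fib (zrank m) :=
  Nat.sInf_mem (exists_pos_dvd_fib hm)

theorem zrank_two : zrank 2 = 3 := by
  refine le_antisymm (Nat.sInf_le ⟨by norm_num, by decide⟩)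
    (le_csInf ⟨3, by norm_num, by decide⟩ ?_)
  rintro n ⟨hn, hdvd⟩
  by_contra! h
  interval_cases n <;> simp at hdvd

theorem goldPhi_prime_valuation_general (n p v m : ℕ) (hp : p.Prime)
    (hm : (m : ℂ) = goldPhi n) (hpm : p ∣ m) (hv : 1 ≤ v)
    (hnz : n = zrank p * p ^ v) (hne : ¬(p = 2 ∧ n = 6)) :
    p ∣ m ∧ ¬ p ^ 2 ∣ m := by
  refine ⟨hpm, fun hsq => ?_⟩
  obtain ⟨hz, hpz⟩ := zrank_spec hp.ne_zero
  set k := zrank p * p ^ (v - 1) with hk_def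
  have hn : n = p * k := by
    rw [hnz, hk_def, mul_left_comm, ← pow_succ', Nat.sub_add_cancel hv]
  have hk : k ≠ 0 := mul_ne_zero hz.ne' (pow_ne_zero _ hp.ne_zero)
  have hkn : k ≠ n := by
    rw [hn]; exact (lt_mul_of_one_lt_left (Nat.pos_of_ne_zero hk) hp.one_lt).ne
  have hmk : m * Nat.fib k ∣ Nat.fib (p * k) :=
    hn ▸ mul_fib_dvd_fib_of_eq_goldPhi (Dvd.intro_left p hn.symm) hkn hm
  have hsqk : p ^ 2 * Nat.fib k ∣ Nat.fib (p * k) := (mul_dvd_mul_right hsq _).trans hmk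
  rcases eq_or_ne p 2 with rfl | hp2
  · rw [zrank_two] at hk_def hnz
    have hv2 : 2 ≤ v := by
      by_contra! hv1
      obtain rfl : v = 1 := by omega
      exact hne ⟨rfl, hnz⟩
    refine not_four_mul_fib_dvd_fib_two_mul ⟨2 ^ (v - 2), ?_⟩ hk hsqk
    rw [hk_def, show v - 1 = v - 2 + 1 by omega, pow_succ]; ring
  · exact not_sq_mul_fib_dvd_fib_mul (hp.odd_of_ne_two hp2) hp.one_lt.ne' hk
      (hpz.trans (Nat.fib_dvd _ _ (dvd_mul_right _ _))) hsqk

theorem goldPhi_prime_valuation (n p v m : ℕ) (hn : 1 ≤ n) (hp : p.Prime)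
    (hm : (m : ℂ) = goldPhi n) (hpm : p ∣ m) (hv : 1 ≤ v)
    (hnz : n = zrank p * p ^ v) (hne : ¬(p = 2 ∧ n = 6)) :
    p ∣ m ∧ ¬ p ^ 2 ∣ m :=
  goldPhi_prime_valuation_general n p v m hp hm hpm hv hnz hne
end

section
/- There is a constant C such that for all integers n ≥ 1, |log Φ_n − φ(n)·log α| ≤ C, where Φ_n is the n-th homogeneous cyclotomic factor at the golden ratio, φ is Euler's totient function, and α = (1+√5)/2. -/
/-!
For `n ≥ 2` the product defining `goldPhi n` runs over the primitive `n`-th roots of unity `ξ`.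
Since `ξ ↦ ξ⁻¹` permutes them and `|ξ| = 1`, `|goldPhi n| = α ^ φ(n) * |Φₙ(β / α)|` with `Φₙ` the
cyclotomic polynomial, and `|β / α| = (3 - √5) / 2 ≤ 1 / 2`. Möbius inversion of
`Xⁿ - 1 = ∏_{d ∣ n} Φ_d` writes `log |Φₙ(z)|` as `∑_{d ∣ n} μ(n / d) log |1 - z ^ d|`, and for
`|z| ≤ 1 / 2` each term is at most `(3 / 2) (1 / 2) ^ d`, so the sum is bounded by `3`.
-/

open Finset

open Polynomial Complex ArithmeticFunction.Moebius

theorem IsPrimitiveRoot.prod_filter_coprime_Icc_pow {R M : Type*} [CommRing R] [IsDomain R]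
    [CommMonoid M] {n : ℕ} {ζ : R} (hζ : IsPrimitiveRoot ζ n) (hn : 1 < n) (f : R → M) :
    ∏ k ∈ (Icc 1 n).filter (fun k => n.gcd k = 1), f (ζ ^ k) = ∏ ξ ∈ primitiveRoots n R, f ξ := by
  have hn0 : 0 < n := by omega
  have : NeZero n := ⟨hn0.ne'⟩
  have lt_of_mem : ∀ k ∈ (Icc 1 n).filter (fun k => n.gcd k = 1), k < n := by
    intro k hk
    simp only [mem_filter, mem_Icc] at hk
    refine lt_of_le_of_ne hk.1.2 ?_
    rintro rfl
    simp only [Nat.gcd_self] at hk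
    omega
  refine prod_nbij (ζ ^ ·) (fun k hk => ?_) (fun i hi j hj hij => ?_) (fun ξ hξ => ?_)
    (fun _ _ => rfl)
  · rw [mem_primitiveRoots hn0, hζ.pow_iff_coprime hn0]
    exact Nat.coprime_comm.mp (mem_filter.mp hk).2
  · exact hζ.pow_inj (lt_of_mem i hi) (lt_of_mem j hj) hij
  · rw [mem_coe, mem_primitiveRoots hn0] at hξ
    obtain ⟨k, hk, rfl⟩ := hζ.eq_pow_of_pow_eq_one hξ.pow_eq_one
    have hcop : n.gcd k = 1 := Nat.coprime_comm.mp ((hζ.pow_iff_coprime hn0 k).mp hξ)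
    refine ⟨k, ?_, rfl⟩
    simp only [coe_filter, mem_Icc, Set.mem_ofPred_eq]
    refine ⟨⟨Nat.pos_of_ne_zero ?_, hk.le⟩, hcop⟩
    rintro rfl
    simp only [Nat.gcd_zero_right] at hcop
    omega

theorem prod_filter_coprime_Icc_exp {M : Type*} [CommMonoid M] {n : ℕ} (hn : 1 < n)
    (f : ℂ → M) :
    ∏ k ∈ (Icc 1 n).filter (fun k => n.gcd k = 1), f (exp (2 * Real.pi * I * k / n)) =
      ∏ ξ ∈ primitiveRoots n ℂ, f ξ := by
  rw [← (isPrimitiveRoot_exp n (by omega)).prod_filter_coprime_Icc_pow hn]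
  refine prod_congr rfl fun k _ => ?_
  rw [← exp_nat_mul]
  ring_nf

theorem norm_prod_primitiveRoots_sub_mul {n : ℕ} (hn : n ≠ 0) {a : ℂ} (ha : a ≠ 0) (b : ℂ) :
    ‖∏ ξ ∈ primitiveRoots n ℂ, (a - ξ * b)‖ =
      ‖a‖ ^ n.totient * ‖eval (b / a) (cyclotomic n ℂ)‖ := by
  have hn0 : 0 < n := Nat.pos_of_ne_zero hn
  have hinv : ∏ ξ ∈ primitiveRoots n ℂ, (a - ξ * b) = ∏ ξ ∈ primitiveRoots n ℂ, (a - ξ⁻¹ * b) :=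
    prod_nbij' (·⁻¹) (·⁻¹) (fun ξ hξ => by simpa [mem_primitiveRoots hn0] using hξ)
      (fun ξ hξ => by simpa [mem_primitiveRoots hn0] using hξ)
      (fun ξ _ => inv_inv ξ) (fun ξ _ => inv_inv ξ) (fun ξ _ => by rw [inv_inv])
  have hterm : ∀ ξ ∈ primitiveRoots n ℂ, ‖a - ξ⁻¹ * b‖ = ‖a‖ * ‖b / a - ξ‖ := by
    intro ξ hξ
    have hξ1 : ‖ξ‖ = 1 := ((mem_primitiveRoots hn0).mp hξ).norm'_eq_one hn
    have hξ0 : ξ ≠ 0 := norm_ne_zero_iff.mp (by rw [hξ1]; exact one_ne_zero)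
    calc ‖a - ξ⁻¹ * b‖ = ‖ξ⁻¹‖ * ‖a‖ * ‖b / a - ξ‖ := by
          rw [← norm_mul, ← norm_mul, ← norm_neg]; congr 1; field_simp; ring
      _ = ‖a‖ * ‖b / a - ξ‖ := by rw [norm_inv, hξ1, inv_one, one_mul]
  rw [hinv, norm_prod, prod_congr rfl hterm, prod_mul_distrib, prod_const,
    Complex.card_primitiveRoots, ← norm_prod, cyclotomic_eq_prod_X_sub_primitiveRoots
      (isPrimitiveRoot_exp n hn), eval_prod]
  simp only [eval_sub, eval_X, eval_C]

section CyclotomicValue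

variable {z : ℂ} {n : ℕ}

theorem eval_cyclotomic_ne_zero_of_norm_ne_one (hz : ‖z‖ ≠ 1) :
    eval z (cyclotomic n ℂ) ≠ 0 := by
  rcases Nat.eq_zero_or_pos n with rfl | hn
  · simp
  intro h
  have : NeZero (n : ℂ) := ⟨Nat.cast_ne_zero.mpr hn.ne'⟩
  exact hz (((isRoot_cyclotomic_iff (n := n)).mp h).norm'_eq_one hn.ne')

theorem sum_divisors_log_norm_eval_cyclotomic (hz : ‖z‖ ≠ 1) (hn : 0 < n) :
    ∑ d ∈ n.divisors, Real.log ‖eval z (cyclotomic d ℂ)‖ = Real.log ‖1 - z ^ n‖ := by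
  rw [← Real.log_prod fun d hd => norm_ne_zero_iff.mpr
      (eval_cyclotomic_ne_zero_of_norm_ne_one hz),
    ← norm_prod, ← eval_prod, prod_cyclotomic_eq_X_pow_sub_one hn, norm_sub_rev]
  simp

theorem log_norm_eval_cyclotomic_eq_sum_moebius (hz : ‖z‖ ≠ 1) (hn : 0 < n) :
    Real.log ‖eval z (cyclotomic n ℂ)‖ =
      ∑ x ∈ n.divisorsAntidiagonal, μ x.1 • Real.log ‖1 - z ^ x.2‖ :=
  (ArithmeticFunction.sum_eq_iff_sum_smul_moebius_eq.mp
    (fun _ hm => sum_divisors_log_norm_eval_cyclotomic hz hm) n hn).symm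

theorem abs_log_norm_one_sub_le {w : ℂ} (hw : ‖w‖ ≤ 1 / 2) :
    |Real.log ‖1 - w‖| ≤ 3 / 2 * ‖w‖ := by
  rw [← log_re, sub_eq_add_neg]
  calc |(log (1 + -w)).re| ≤ ‖log (1 + -w)‖ := abs_re_le_norm _
    _ ≤ 3 / 2 * ‖-w‖ := norm_log_one_add_half_le_self (by rwa [norm_neg])
    _ = 3 / 2 * ‖w‖ := by rw [norm_neg]

theorem abs_log_norm_eval_cyclotomic_le (hz : ‖z‖ ≤ 1 / 2) (hn : 0 < n) :
    |Real.log ‖eval z (cyclotomic n ℂ)‖| ≤ 3 := by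
  have hterm : ∀ d ≠ 0, |Real.log ‖1 - z ^ d‖| ≤ 3 / 2 * (1 / 2) ^ d := fun d hd =>
    calc |Real.log ‖1 - z ^ d‖| ≤ 3 / 2 * ‖z‖ ^ d := by
          rw [← norm_pow]
          refine abs_log_norm_one_sub_le ?_
          rw [norm_pow]
          exact (pow_le_of_le_one (norm_nonneg z) (hz.trans (by norm_num)) hd).trans hz
      _ ≤ 3 / 2 * (1 / 2) ^ d := by gcongr
  rw [log_norm_eval_cyclotomic_eq_sum_moebius (hz.trans_lt (by norm_num)).ne hn]
  calc |∑ x ∈ n.divisorsAntidiagonal, μ x.1 • Real.log ‖1 - z ^ x.2‖|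
      ≤ ∑ x ∈ n.divisorsAntidiagonal, 3 / 2 * (1 / 2 : ℝ) ^ x.2 := by
        refine (abs_sum_le_sum_abs _ _).trans (sum_le_sum fun x hx => ?_)
        have hx2 : x.2 ≠ 0 :=
          (Nat.pos_of_mem_divisors (Nat.snd_mem_divisors_of_mem_antidiagonal hx)).ne'
        have hμ : |(μ x.1 : ℝ)| ≤ 1 := mod_cast ArithmeticFunction.abs_moebius_le_one
        rw [zsmul_eq_mul, abs_mul]
        exact (mul_le_of_le_one_left (abs_nonneg _) hμ).trans (hterm x.2 hx2)
    _ = 3 / 2 * ∑ d ∈ n.divisors, (1 / 2 : ℝ) ^ d := by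
        rw [Nat.sum_divisorsAntidiagonal' (fun _ d => 3 / 2 * (1 / 2 : ℝ) ^ d), mul_sum]
    _ ≤ 3 / 2 * ∑ d ∈ range (n + 1), (1 / 2 : ℝ) ^ d := by
        gcongr
        · intro d hd
          rw [mem_range, Nat.lt_succ_iff]
          exact Nat.divisor_le hd
    _ ≤ 3 := by linarith [sum_geometric_two_le (n + 1)]

end CyclotomicValue

theorem goldenA_eq_goldenRatio : goldenA = Real.goldenRatio := by
  simp [goldenA, Real.goldenRatio]

theorem goldenB_eq_goldenConj : goldenB = Real.goldenConj := by
  simp [goldenB, Real.goldenConj]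

theorem norm_goldenB_div_goldenA_le : ‖goldenB / goldenA‖ ≤ 1 / 2 := by
  rw [goldenA_eq_goldenRatio, goldenB_eq_goldenConj, ← ofReal_div, norm_real, Real.norm_eq_abs,
    abs_div, abs_of_neg Real.goldenConj_neg, abs_of_pos Real.goldenRatio_pos,
    div_le_iff₀ Real.goldenRatio_pos, Real.goldenRatio, Real.goldenConj]
  have h : √5 ≤ 3 := Real.sqrt_le_iff.mpr (by norm_num)
  linarith only [h]

theorem norm_goldPhi {n : ℕ} (hn : 1 < n) :
    ‖goldPhi n‖ = Real.goldenRatio ^ n.totient * ‖eval (goldenB / goldenA) (cyclotomic n ℂ)‖ := by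
  have hA : goldenA ≠ 0 := by
    rw [goldenA_eq_goldenRatio]; exact ofReal_ne_zero.mpr Real.goldenRatio_ne_zero
  rw [goldPhi, if_neg hn.ne', prod_filter_coprime_Icc_exp hn (fun ξ => goldenA - ξ * goldenB),
    norm_prod_primitiveRoots_sub_mul (by omega) hA, goldenA_eq_goldenRatio, norm_real,
    Real.norm_of_nonneg Real.goldenRatio_pos.le]

theorem log_goldPhi :
    ∃ C : ℝ, ∀ n : ℕ, 1 ≤ n →
      |Real.log ‖goldPhi n‖ -
        (Nat.totient n : ℝ) * Real.log ((1 + Real.sqrt 5) / 2)| ≤ C := by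
  refine ⟨3, fun n hn => ?_⟩
  obtain rfl | hn := hn.eq_or_lt
  · have h0 : 0 ≤ Real.log Real.goldenRatio := Real.log_nonneg Real.one_lt_goldenRatio.le
    have h1 : Real.log Real.goldenRatio ≤ Real.goldenRatio - 1 :=
      Real.log_le_sub_one_of_pos Real.goldenRatio_pos
    simp only [goldPhi, if_true, norm_one, Real.log_one, Nat.totient_one, Nat.cast_one, one_mul,
      zero_sub, abs_neg, abs_of_nonneg h0]
    linarith [Real.goldenRatio_lt_two]
  · have hz := norm_goldenB_div_goldenA_le
    have hΦ := eval_cyclotomic_ne_zero_of_norm_ne_one (n := n) (hz.trans_lt (by norm_num)).ne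
    rw [norm_goldPhi hn, Real.log_mul (by positivity) (norm_ne_zero_iff.mpr hΦ), Real.log_pow,
      add_sub_cancel_left]
    exact abs_log_norm_eval_cyclotomic_le hz (by omega)
end
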